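/- arXiv:0804.4702 — 3 statements merged into one kernel-verified Lean document; each statement's English description precedes it below -/
import Mathlib

section
/- Let ψ : C → D be a function between inductive categories satisfying conditions (ICP1), (ICP2), (ICP3) and (ICP5). Then ψ also satisfies condition (ICP4): for all a ∈ C and identities e, f ∈ C_o, (aψ)⊗(fψ) ≤ (a⊗f)ψ and (eψ)⊗(aψ) ≤ (e⊗a)ψ. -/
universe u v w

/-- Identities of a partial binary operation given by definedness relation `D`
and value function `mul`: idempotents acting as left/right identity whenever
the relevant products are defined. -/
def IsIdOf {C : Type u} (D : C → C → Prop) (mul : C → C → C) (e : C) : Prop :=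
  D e e ∧ mul e e = e ∧ (∀ x, D e x → mul e x = x) ∧ (∀ x, D x e → mul x e = x)

/-- A small category, presented as a set with a partial binary operation:
`D x y` means the product `x·y` is defined, and `mul x y` is its value
(meaningful only when `D x y` holds). -/
structure SmallCat (C : Type u) where
  D : C → C → Prop
  mul : C → C → C
  d : C → C
  r : C → C
  /-- (Ca1): ∃ x·(y·z) ↔ ∃ (x·y)·z -/
  ca1 : ∀ x y z : C, (D y z ∧ D x (mul y z)) ↔ (D x y ∧ D (mul x y) z)
  /-- (Ca1): associativity when defined -/
  ca1_eq : ∀ x y z : C, D x y → D y z → mul x (mul y z) = mul (mul x y) z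
  /-- (Ca2): ∃ x·(y·z) ↔ ∃ x·y and ∃ y·z -/
  ca2 : ∀ x y z : C, (D y z ∧ D x (mul y z)) ↔ (D x y ∧ D y z)
  /-- (Ca3): existence and uniqueness of domain and range identities -/
  d_id : ∀ x, IsIdOf D mul (d x)
  r_id : ∀ x, IsIdOf D mul (r x)
  d_def : ∀ x, D (d x) x
  r_def : ∀ x, D x (r x)
  d_unique : ∀ x e, IsIdOf D mul e → D e x → e = d x
  r_unique : ∀ x e, IsIdOf D mul e → D x e → e = r x
  /-- x·y is defined iff r(x) = d(y) -/
  defined_iff : ∀ x y, D x y ↔ r x = d y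

/-- An ordered category: a small category with a partial order satisfying
(Or1)–(Or3), with corestriction `cores a f = a|f` and restriction
`restr f a = f|a`. -/
structure OrdCat (C : Type u) extends SmallCat C where
  le : C → C → Prop
  le_refl : ∀ a, le a a
  le_trans : ∀ a b c, le a b → le b c → le a c
  le_antisymm : ∀ a b, le a b → le b a → a = b
  or1 : ∀ a b a' b', le a a' → le b b' → D a b → D a' b' → le (mul a b) (mul a' b')
  or2d : ∀ a b, le a b → le (d a) (d b)
  or2r : ∀ a b, le a b → le (r a) (r b)
  cores : C → C → C
  restr : C → C → C
  cores_le : ∀ a f, IsIdOf D mul f → le f (r a) → le (cores a f) a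
  cores_r : ∀ a f, IsIdOf D mul f → le f (r a) → r (cores a f) = f
  cores_unique : ∀ a f, IsIdOf D mul f → le f (r a) →
    ∀ b, le b a → r b = f → b = cores a f
  restr_le : ∀ f a, IsIdOf D mul f → le f (d a) → le (restr f a) a
  restr_d : ∀ f a, IsIdOf D mul f → le f (d a) → d (restr f a) = f
  restr_unique : ∀ f a, IsIdOf D mul f → le f (d a) →
    ∀ b, le b a → d b = f → b = restr f a

/-- An inductive category: an ordered category in which any two identities
have a greatest lower bound among the identities. -/
structure IndCat (C : Type u) extends OrdCat C where
  meet : C → C → C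
  meet_id : ∀ e f, IsIdOf D mul e → IsIdOf D mul f → IsIdOf D mul (meet e f)
  meet_le_left : ∀ e f, IsIdOf D mul e → IsIdOf D mul f → le (meet e f) e
  meet_le_right : ∀ e f, IsIdOf D mul e → IsIdOf D mul f → le (meet e f) f
  meet_glb : ∀ e f g, IsIdOf D mul e → IsIdOf D mul f → IsIdOf D mul g →
    le g e → le g f → le g (meet e f)

/-- The pseudoproduct a⊗b = (a|(r(a)∧d(b))) · ((r(a)∧d(b))|b) of an
inductive category. -/
def IndCat.pp {C : Type u} (K : IndCat C) (a b : C) : C :=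
  K.mul (K.cores a (K.meet (K.r a) (K.d b))) (K.restr (K.meet (K.r a) (K.d b)) b)

/-- An inductive groupoid: an inductive category with inverses. -/
structure IndGrpd (C : Type u) extends IndCat C where
  inv : C → C
  inv_def_right : ∀ x, D x (inv x)
  inv_def_left : ∀ x, D (inv x) x
  mul_inv : ∀ x, mul x (inv x) = d x
  inv_mul : ∀ x, mul (inv x) x = r x

/-- A (two-sided) restriction semigroup with respect to a subsemilattice `E`
of idempotents, with unary operations `plus` (a⁺) and `star` (a⁎). -/
structure RSgrp (S : Type u) where
  mul : S → S → S
  assoc : ∀ a b c : S, mul (mul a b) c = mul a (mul b c)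
  E : Set S
  E_idem : ∀ e ∈ E, mul e e = e
  E_comm : ∀ e ∈ E, ∀ f ∈ E, mul e f = mul f e
  E_mul_mem : ∀ e ∈ E, ∀ f ∈ E, mul e f ∈ E
  plus : S → S
  star : S → S
  plus_mem : ∀ a, plus a ∈ E
  star_mem : ∀ a, star a ∈ E
  /-- a R̃_E a⁺ : for all e ∈ E, ea = a ↔ ea⁺ = a⁺ -/
  plus_spec : ∀ a : S, ∀ e ∈ E, (mul e a = a ↔ mul e (plus a) = plus a)
  /-- a L̃_E a⁎ : for all e ∈ E, ae = a ↔ a⁎e = a⁎ -/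
  star_spec : ∀ a : S, ∀ e ∈ E, (mul a e = a ↔ mul (star a) e = star a)
  /-- R̃_E is a left congruence -/
  rtilde_left_cong : ∀ a b c : S,
    (∀ e ∈ E, mul e a = a ↔ mul e b = b) →
    ∀ e ∈ E, (mul e (mul c a) = mul c a ↔ mul e (mul c b) = mul c b)
  /-- L̃_E is a right congruence -/
  ltilde_right_cong : ∀ a b c : S,
    (∀ e ∈ E, mul a e = a ↔ mul b e = b) →
    ∀ e ∈ E, (mul (mul a c) e = mul a c ↔ mul (mul b c) e = mul b c)
  /-- ae = (ae)⁺a -/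
  ae_eq : ∀ a : S, ∀ e ∈ E, mul a e = mul (plus (mul a e)) a
  /-- ea = a(ea)⁎ -/
  ea_eq : ∀ a : S, ∀ e ∈ E, mul e a = mul a (star (mul e a))

/-- The natural partial order of a restriction semigroup: a ≤ b iff a = a⁺b. -/
def RSgrp.NatLe {S : Type u} (R : RSgrp S) (a b : S) : Prop :=
  a = R.mul (R.plus a) b

/-- `K` is the inductive category induced by the restriction semigroup `R`
via the restricted product and the natural partial order. -/
def InducedIndCat {S : Type u} (R : RSgrp S) (K : IndCat S) : Prop :=
  (∀ a b, K.le a b ↔ R.NatLe a b) ∧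
  (∀ a b, K.D a b ↔ R.star a = R.plus b) ∧
  (∀ a b, K.D a b → K.mul a b = R.mul a b) ∧
  (∀ x, K.d x = R.plus x) ∧
  (∀ x, K.r x = R.star x) ∧
  (∀ e, IsIdOf K.D K.mul e ↔ e ∈ R.E) ∧
  (∀ f a, f ∈ R.E → K.le f (K.d a) → K.restr f a = R.mul f a) ∧
  (∀ a f, f ∈ R.E → K.le f (K.r a) → K.cores a f = R.mul a f) ∧
  (∀ e f, e ∈ R.E → f ∈ R.E → K.meet e f = R.mul e f)

/-- `R` is the restriction semigroup induced by the inductive category `K`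
via the pseudoproduct, with E = identities, a⁺ = d(a), a⁎ = r(a). -/
def InducedRSgrp {C : Type u} (K : IndCat C) (R : RSgrp C) : Prop :=
  R.mul = K.pp ∧ R.E = {e | IsIdOf K.D K.mul e} ∧
  (∀ a, R.plus a = K.d a) ∧ (∀ a, R.star a = K.r a)

/-- An inverse semigroup: every element has a unique inverse. -/
structure InvSgrp (S : Type u) where
  mul : S → S → S
  assoc : ∀ a b c : S, mul (mul a b) c = mul a (mul b c)
  inv : S → S
  inv_spec₁ : ∀ a, mul (mul a (inv a)) a = a
  inv_spec₂ : ∀ a, mul (mul (inv a) a) (inv a) = inv a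
  inv_unique : ∀ a b, mul (mul a b) a = a → mul (mul b a) b = b → b = inv a

/-- The natural partial order of an inverse semigroup: a ≤ b iff a = eb for
some idempotent e. -/
def InvSgrp.le {S : Type u} (Si : InvSgrp S) (a b : S) : Prop :=
  ∃ e, Si.mul e e = e ∧ a = Si.mul e b

/-- a⁺ = aa⁻¹ in an inverse semigroup. -/
def InvSgrp.plus {S : Type u} (Si : InvSgrp S) (a : S) : S := Si.mul a (Si.inv a)

/-- a⁎ = a⁻¹a in an inverse semigroup. -/
def InvSgrp.star {S : Type u} (Si : InvSgrp S) (a : S) : S := Si.mul (Si.inv a) a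

/-- A (∨,r)-premorphism between restriction semigroups:
(∨1) (st)θ ≤ (sθ)(tθ); (∨2) s⁺θ ≤ (sθ)⁺ and s⁎θ ≤ (sθ)⁎. -/
def IsVPre {S : Type u} {T : Type v} (R : RSgrp S) (R' : RSgrp T) (θ : S → T) : Prop :=
  (∀ s t, R'.NatLe (θ (R.mul s t)) (R'.mul (θ s) (θ t))) ∧
  (∀ s, R'.NatLe (θ (R.plus s)) (R'.plus (θ s))) ∧
  (∀ s, R'.NatLe (θ (R.star s)) (R'.star (θ s)))

/-- A (∧,r)-premorphism between restriction semigroups: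
(∧1) (sθ)(tθ) ≤ (st)θ; (∧2) (sθ)⁺ ≤ s⁺θ and (sθ)⁎ ≤ s⁎θ. -/
def IsWPre {S : Type u} {T : Type v} (R : RSgrp S) (R' : RSgrp T) (θ : S → T) : Prop :=
  (∀ s t, R'.NatLe (R'.mul (θ s) (θ t)) (θ (R.mul s t))) ∧
  (∀ s, R'.NatLe (R'.plus (θ s)) (θ (R.plus s))) ∧
  (∀ s, R'.NatLe (R'.star (θ s)) (θ (R.star s)))

/-- An ordered (∧,r)-premorphism: a (∧,r)-premorphism which is also
order-preserving for the natural partial orders. -/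
def IsOrderedWPre {S : Type u} {T : Type v} (R : RSgrp S) (R' : RSgrp T) (θ : S → T) : Prop :=
  IsWPre R R' θ ∧ ∀ s t, R.NatLe s t → R'.NatLe (θ s) (θ t)

/-- A strong (∧,r)-premorphism: a (∧,r)-premorphism satisfying
(∧1)′ (sθ)(tθ) = (sθ)⁺·((st)θ) = ((st)θ)·(tθ)⁎. -/
def IsStrongWPre {S : Type u} {T : Type v} (R : RSgrp S) (R' : RSgrp T) (θ : S → T) : Prop :=
  IsWPre R R' θ ∧
  (∀ s t, R'.mul (θ s) (θ t) = R'.mul (R'.plus (θ s)) (θ (R.mul s t))) ∧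
  (∀ s t, R'.mul (θ s) (θ t) = R'.mul (θ (R.mul s t)) (R'.star (θ t)))

/-- An ordered functor between ordered categories. -/
def IsOrderedFunctor {C : Type u} {D : Type v} (K : OrdCat C) (L : OrdCat D)
    (φ : C → D) : Prop :=
  (∀ x y, K.D x y → L.D (φ x) (φ y)) ∧
  (∀ x y, K.D x y → φ (K.mul x y) = L.mul (φ x) (φ y)) ∧
  (∀ x y, K.le x y → L.le (φ x) (φ y))

/-- (ICP1): if s·t is defined then (sψ)⊗(tψ) ≤ (s·t)ψ. -/
def ICP1 {C : Type u} {D : Type v} (K : IndCat C) (L : IndCat D) (ψ : C → D) : Prop :=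
  ∀ s t, K.D s t → L.le (L.pp (ψ s) (ψ t)) (ψ (K.mul s t))

/-- (ICP2): d(sψ) ≤ d(s)ψ and r(sψ) ≤ r(s)ψ. -/
def ICP2 {C : Type u} {D : Type v} (K : IndCat C) (L : IndCat D) (ψ : C → D) : Prop :=
  (∀ s, L.le (L.d (ψ s)) (ψ (K.d s))) ∧ (∀ s, L.le (L.r (ψ s)) (ψ (K.r s)))

/-- (ICP3): ψ is order-preserving. -/
def ICP3 {C : Type u} {D : Type v} (K : IndCat C) (L : IndCat D) (ψ : C → D) : Prop :=
  ∀ s t, K.le s t → L.le (ψ s) (ψ t)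

/-- (ICP4): (aψ)⊗(fψ) ≤ (a⊗f)ψ and (eψ)⊗(aψ) ≤ (e⊗a)ψ for identities e, f. -/
def ICP4 {C : Type u} {D : Type v} (K : IndCat C) (L : IndCat D) (ψ : C → D) : Prop :=
  (∀ a f, IsIdOf K.D K.mul f → L.le (L.pp (ψ a) (ψ f)) (ψ (K.pp a f))) ∧
  (∀ e a, IsIdOf K.D K.mul e → L.le (L.pp (ψ e) (ψ a)) (ψ (K.pp e a)))

/-- An inductive category prefunctor: (ICP1)–(ICP4). -/
def IsICP {C : Type u} {D : Type v} (K : IndCat C) (L : IndCat D) (ψ : C → D) : Prop :=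
  ICP1 K L ψ ∧ ICP2 K L ψ ∧ ICP3 K L ψ ∧ ICP4 K L ψ

/-- (ICP5): d((sψ)⊗(tψ)) = d(sψ)∧d((s⊗t)ψ) and
r((sψ)⊗(tψ)) = r((s⊗t)ψ)∧r(tψ). -/
def ICP5 {C : Type u} {D : Type v} (K : IndCat C) (L : IndCat D) (ψ : C → D) : Prop :=
  (∀ s t, L.d (L.pp (ψ s) (ψ t)) = L.meet (L.d (ψ s)) (L.d (ψ (K.pp s t)))) ∧
  (∀ s t, L.r (L.pp (ψ s) (ψ t)) = L.meet (L.r (ψ (K.pp s t))) (L.r (ψ t)))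

/-- A strong inductive category prefunctor: (ICP1)–(ICP4) together with (ICP5). -/
def IsStrongICP {C : Type u} {D : Type v} (K : IndCat C) (L : IndCat D) (ψ : C → D) : Prop :=
  IsICP K L ψ ∧ ICP5 K L ψ

/-- An ordered groupoid premorphism between inductive groupoids:
(ICP1), (IGP) (gψ)⁻¹ = g⁻¹ψ, and (ICP3). -/
def IsOGP {C : Type u} {D : Type v} (K : IndGrpd C) (L : IndGrpd D) (ψ : C → D) : Prop :=
  ICP1 K.toIndCat L.toIndCat ψ ∧
  (∀ g, L.inv (ψ g) = ψ (K.inv g)) ∧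
  ICP3 K.toIndCat L.toIndCat ψ

section Aux

variable {C : Type u} (K : IndCat C)

lemma aux_id_d (e : C) (he : IsIdOf K.D K.mul e) : K.d e = e :=
  (K.d_unique e e he he.1).symm

lemma aux_id_r (e : C) (he : IsIdOf K.D K.mul e) : K.r e = e :=
  (K.r_unique e e he he.1).symm

/-- mul x g = x when g is identity and r x = g. -/
lemma aux_mul_id (x g : C) (hg : IsIdOf K.D K.mul g) (h : K.r x = g) :
    K.mul x g = x :=
  hg.2.2.2 x ((K.defined_iff x g).mpr (h.trans (aux_id_d K g hg).symm))

/-- mul g x = x when g is identity and d x = g. -/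
lemma aux_id_mul (g x : C) (hg : IsIdOf K.D K.mul g) (h : K.d x = g) :
    K.mul g x = x :=
  hg.2.2.1 x ((K.defined_iff g x).mpr ((aux_id_r K g hg).trans h.symm))

lemma aux_le_cores (a b : C) (h : K.le b a) : b = K.cores a (K.r b) :=
  K.cores_unique a (K.r b) (K.r_id b) (K.or2r _ _ h) b h rfl

lemma aux_le_restr (a b : C) (h : K.le b a) : b = K.restr (K.d b) a :=
  K.restr_unique (K.d b) a (K.d_id b) (K.or2d _ _ h) b h rfl

lemma aux_cores_mono (a e e' : C) (he : IsIdOf K.D K.mul e)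
    (he' : IsIdOf K.D K.mul e') (h1 : K.le e e') (h2 : K.le e' (K.r a)) :
    K.le (K.cores a e) (K.cores a e') := by
  have hca : K.le (K.cores a e') a := K.cores_le _ _ he' h2
  have hr : K.r (K.cores a e') = e' := K.cores_r _ _ he' h2
  have h1' : K.le e (K.r (K.cores a e')) := by rw [hr]; exact h1
  have hc2 : K.le (K.cores (K.cores a e') e) (K.cores a e') := K.cores_le _ _ he h1'
  have heq : K.cores (K.cores a e') e = K.cores a e :=
    K.cores_unique a e he (K.le_trans _ _ _ h1 h2) _ (K.le_trans _ _ _ hc2 hca)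
      (K.cores_r _ _ he h1')
  exact heq ▸ hc2

lemma aux_restr_mono (a e e' : C) (he : IsIdOf K.D K.mul e)
    (he' : IsIdOf K.D K.mul e') (h1 : K.le e e') (h2 : K.le e' (K.d a)) :
    K.le (K.restr e a) (K.restr e' a) := by
  have hca : K.le (K.restr e' a) a := K.restr_le _ _ he' h2
  have hr : K.d (K.restr e' a) = e' := K.restr_d _ _ he' h2
  have h1' : K.le e (K.d (K.restr e' a)) := by rw [hr]; exact h1
  have hc2 : K.le (K.restr e (K.restr e' a)) (K.restr e' a) := K.restr_le _ _ he h1'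
  have heq : K.restr e (K.restr e' a) = K.restr e a :=
    K.restr_unique e a he (K.le_trans _ _ _ h1 h2) _ (K.le_trans _ _ _ hc2 hca)
      (K.restr_d _ _ he h1')
  exact heq ▸ hc2

end Aux

/-- If ψ between inductive categories satisfies (ICP1),
(ICP2), (ICP3) and (ICP5), then it satisfies (ICP4). -/
theorem stmt_16 {C : Type u} {D : Type v} (K : IndCat C) (L : IndCat D)
    (ψ : C → D) (h1 : ICP1 K L ψ) (h2 : ICP2 K L ψ) (h3 : ICP3 K L ψ)
    (h5 : ICP5 K L ψ) :
    ICP4 K L ψ := by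
  constructor
  · -- (aψ)⊗(fψ) ≤ (a⊗f)ψ
    intro a f hf
    set m' := L.meet (L.r (ψ a)) (L.d (ψ f)) with hm'def
    have hm'id : IsIdOf L.D L.mul m' := L.meet_id _ _ (L.r_id _) (L.d_id _)
    have hm'r : L.le m' (L.r (ψ a)) := L.meet_le_left _ _ (L.r_id _) (L.d_id _)
    have hm'd : L.le m' (L.d (ψ f)) := L.meet_le_right _ _ (L.r_id _) (L.d_id _)
    have hKdf : K.d f = f := aux_id_d K f hf
    have hdf : L.le (L.d (ψ f)) (ψ f) := by
      have := h2.1 f; rwa [hKdf] at this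
    have hm'f : L.le m' (ψ f) := L.le_trans _ _ _ hm'd hdf
    have hrestr : L.restr m' (ψ f) = m' :=
      (L.restr_unique m' (ψ f) hm'id hm'd m' hm'f (aux_id_d L m' hm'id)).symm
    -- u = cores(aψ, m')
    have hu : L.pp (ψ a) (ψ f) = L.cores (ψ a) m' := by
      show L.mul (L.cores (ψ a) m') (L.restr m' (ψ f)) = _
      rw [hrestr]
      exact aux_mul_id L _ _ hm'id (L.cores_r _ _ hm'id hm'r)
    have hru : L.r (L.pp (ψ a) (ψ f)) = m' := by
      rw [hu]; exact L.cores_r _ _ hm'id hm'r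
    -- K.pp a f = cores(a, mm) ≤ a
    set mm := K.meet (K.r a) (K.d f) with hmmdef
    have hmmid : IsIdOf K.D K.mul mm := K.meet_id _ _ (K.r_id _) (K.d_id _)
    have hmmr : K.le mm (K.r a) := K.meet_le_left _ _ (K.r_id _) (K.d_id _)
    have hmmd : K.le mm (K.d f) := K.meet_le_right _ _ (K.r_id _) (K.d_id _)
    have hmmf : K.le mm f := by rw [← hKdf]; exact hmmd
    have hKrestr : K.restr mm f = mm :=
      (K.restr_unique mm f hmmid hmmd mm hmmf (aux_id_d K mm hmmid)).symm
    have hvK : K.pp a f = K.cores a mm := by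
      show K.mul (K.cores a mm) (K.restr mm f) = _
      rw [hKrestr]
      exact aux_mul_id K _ _ hmmid (K.cores_r _ _ hmmid hmmr)
    have hvle : K.le (K.pp a f) a := by rw [hvK]; exact K.cores_le _ _ hmmid hmmr
    have hva : L.le (ψ (K.pp a f)) (ψ a) := h3 _ _ hvle
    have hveq : ψ (K.pp a f) = L.cores (ψ a) (L.r (ψ (K.pp a f))) :=
      aux_le_cores L _ _ hva
    -- m' = r(u) ≤ r(v) by ICP5
    have hicp5 := h5.2 a f
    have hm'le : L.le m' (L.r (ψ (K.pp a f))) := by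
      rw [← hru, hicp5]
      exact L.meet_le_left _ _ (L.r_id _) (L.r_id _)
    rw [hu, hveq]
    exact aux_cores_mono L (ψ a) m' (L.r (ψ (K.pp a f))) hm'id (L.r_id _) hm'le
      (L.or2r _ _ hva)
  · -- (eψ)⊗(aψ) ≤ (e⊗a)ψ
    intro e a he
    set m' := L.meet (L.r (ψ e)) (L.d (ψ a)) with hm'def
    have hm'id : IsIdOf L.D L.mul m' := L.meet_id _ _ (L.r_id _) (L.d_id _)
    have hm'r : L.le m' (L.r (ψ e)) := L.meet_le_left _ _ (L.r_id _) (L.d_id _)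
    have hm'd : L.le m' (L.d (ψ a)) := L.meet_le_right _ _ (L.r_id _) (L.d_id _)
    have hKre : K.r e = e := aux_id_r K e he
    have hre : L.le (L.r (ψ e)) (ψ e) := by
      have := h2.2 e; rwa [hKre] at this
    have hm'e : L.le m' (ψ e) := L.le_trans _ _ _ hm'r hre
    have hcores : L.cores (ψ e) m' = m' :=
      (L.cores_unique (ψ e) m' hm'id hm'r m' hm'e (aux_id_r L m' hm'id)).symm
    -- u = restr(m', aψ)
    have hu : L.pp (ψ e) (ψ a) = L.restr m' (ψ a) := by
      show L.mul (L.cores (ψ e) m') (L.restr m' (ψ a)) = _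
      rw [hcores]
      exact aux_id_mul L _ _ hm'id (L.restr_d _ _ hm'id hm'd)
    have hdu : L.d (L.pp (ψ e) (ψ a)) = m' := by
      rw [hu]; exact L.restr_d _ _ hm'id hm'd
    -- K.pp e a = restr(mm, a) ≤ a
    set mm := K.meet (K.r e) (K.d a) with hmmdef
    have hmmid : IsIdOf K.D K.mul mm := K.meet_id _ _ (K.r_id _) (K.d_id _)
    have hmmr : K.le mm (K.r e) := K.meet_le_left _ _ (K.r_id _) (K.d_id _)
    have hmmd : K.le mm (K.d a) := K.meet_le_right _ _ (K.r_id _) (K.d_id _)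
    have hmme : K.le mm e := by rw [← hKre]; exact hmmr
    have hKcores : K.cores e mm = mm :=
      (K.cores_unique e mm hmmid hmmr mm hmme (aux_id_r K mm hmmid)).symm
    have hvK : K.pp e a = K.restr mm a := by
      show K.mul (K.cores e mm) (K.restr mm a) = _
      rw [hKcores]
      exact aux_id_mul K _ _ hmmid (K.restr_d _ _ hmmid hmmd)
    have hvle : K.le (K.pp e a) a := by rw [hvK]; exact K.restr_le _ _ hmmid hmmd
    have hva : L.le (ψ (K.pp e a)) (ψ a) := h3 _ _ hvle
    have hveq : ψ (K.pp e a) = L.restr (L.d (ψ (K.pp e a))) (ψ a) :=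
      aux_le_restr L _ _ hva
    have hicp5 := h5.1 e a
    have hm'le : L.le m' (L.d (ψ (K.pp e a))) := by
      rw [← hdu, hicp5]
      exact L.meet_le_right _ _ (L.d_id _) (L.d_id _)
    rw [hu, hveq]
    exact aux_restr_mono L (ψ a) m' (L.d (ψ (K.pp e a))) hm'id (L.d_id _) hm'le
      (L.or2d _ _ hva)
end

section
/- Let θ : S → T be a strong (∧,r)-premorphism between restriction semigroups. Regard S and T as inductive categories via the restricted product (a·b = ab if a⁎ = b⁺, undefined otherwise) and the natural partial order. Then θ is a strong inductive category prefunctor between these inductive categories, i.e. it satisfies (ICP1)–(ICP4) and (ICP5). -/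
universe u v w

section Helpers

variable {S₀ : Type u} (R : RSgrp S₀)

lemma RSgrp.plus_mul_self (a : S₀) : R.mul (R.plus a) a = a :=
  (R.plus_spec a (R.plus a) (R.plus_mem a)).mpr (R.E_idem _ (R.plus_mem a))

lemma RSgrp.mul_star_self (a : S₀) : R.mul a (R.star a) = a :=
  (R.star_spec a (R.star a) (R.star_mem a)).mpr (R.E_idem _ (R.star_mem a))

lemma RSgrp.plus_of_mem {e : S₀} (he : e ∈ R.E) : R.plus e = e := by
  have h1 : R.mul e (R.plus e) = R.plus e := (R.plus_spec e e he).mp (R.E_idem e he)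
  have h2 : R.mul (R.plus e) e = e := R.plus_mul_self e
  rw [R.E_comm e he (R.plus e) (R.plus_mem e)] at h1
  exact h1.symm.trans h2

lemma RSgrp.star_of_mem {e : S₀} (he : e ∈ R.E) : R.star e = e := by
  have h1 : R.mul (R.star e) e = R.star e := (R.star_spec e e he).mp (R.E_idem e he)
  have h2 : R.mul e (R.star e) = e := R.mul_star_self e
  rw [R.E_comm (R.star e) (R.star_mem e) e he] at h1
  exact h1.symm.trans h2

lemma RSgrp.plus_unique {a b : S₀}
    (h : ∀ f ∈ R.E, R.mul f a = a ↔ R.mul f b = b) : R.plus a = R.plus b := by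
  have key : ∀ f ∈ R.E, (R.mul f (R.plus a) = R.plus a ↔ R.mul f (R.plus b) = R.plus b) := by
    intro f hf
    rw [← R.plus_spec a f hf, h f hf, R.plus_spec b f hf]
  have h1 : R.mul (R.plus b) (R.plus a) = R.plus a :=
    (key (R.plus b) (R.plus_mem b)).mpr (R.E_idem _ (R.plus_mem b))
  have h2 : R.mul (R.plus a) (R.plus b) = R.plus b :=
    (key (R.plus a) (R.plus_mem a)).mp (R.E_idem _ (R.plus_mem a))
  rw [R.E_comm _ (R.plus_mem b) _ (R.plus_mem a)] at h1
  exact h1.symm.trans h2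

lemma RSgrp.star_unique {a b : S₀}
    (h : ∀ f ∈ R.E, R.mul a f = a ↔ R.mul b f = b) : R.star a = R.star b := by
  have key : ∀ f ∈ R.E, (R.mul (R.star a) f = R.star a ↔ R.mul (R.star b) f = R.star b) := by
    intro f hf
    rw [← R.star_spec a f hf, h f hf, R.star_spec b f hf]
  have h2 : R.mul (R.star a) (R.star b) = R.star a :=
    (key (R.star b) (R.star_mem b)).mpr (R.E_idem _ (R.star_mem b))
  have h1 : R.mul (R.star a) (R.star b) = R.star b := by
    have h := (key (R.star a) (R.star_mem a)).mp (R.E_idem _ (R.star_mem a))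
    rwa [R.E_comm _ (R.star_mem b) _ (R.star_mem a)] at h
  exact h2.symm.trans h1

lemma RSgrp.plus_mul_left {e : S₀} (he : e ∈ R.E) (a : S₀) :
    R.plus (R.mul e a) = R.mul e (R.plus a) := by
  have hcong := R.rtilde_left_cong a (R.plus a) e (fun f hf => R.plus_spec a f hf)
  have h := R.plus_unique hcong
  rw [h, R.plus_of_mem (R.E_mul_mem e he _ (R.plus_mem a))]

lemma RSgrp.star_mul_right {e : S₀} (he : e ∈ R.E) (a : S₀) :
    R.star (R.mul a e) = R.mul (R.star a) e := by
  have hcong := R.ltilde_right_cong a (R.star a) e (fun f hf => R.star_spec a f hf)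
  have h := R.star_unique hcong
  rw [h, R.star_of_mem (R.E_mul_mem _ (R.star_mem a) e he)]

lemma RSgrp.mul_E_le {e : S₀} (he : e ∈ R.E) (a : S₀) : R.NatLe (R.mul e a) a := by
  unfold RSgrp.NatLe
  rw [R.plus_mul_left he a, R.assoc, R.plus_mul_self]

end Helpers

lemma pp_eq_mul {S₀ : Type u} (R : RSgrp S₀) (K : IndCat S₀)
    (hK : InducedIndCat R K) (a b : S₀) : K.pp a b = R.mul a b := by
  obtain ⟨hle, hD, hmul, hd, hr, hid, hrestr, hcores, hmeet⟩ := hK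
  have hsa : R.star a ∈ R.E := R.star_mem a
  have hpb : R.plus b ∈ R.E := R.plus_mem b
  have hg : R.mul (R.star a) (R.plus b) ∈ R.E := R.E_mul_mem _ hsa _ hpb
  have hm : K.meet (K.r a) (K.d b) = R.mul (R.star a) (R.plus b) := by
    rw [hr, hd]; exact hmeet _ _ hsa hpb
  have hgsa : R.NatLe (R.mul (R.star a) (R.plus b)) (R.star a) := by
    unfold RSgrp.NatLe
    rw [R.plus_of_mem hg, R.assoc, R.E_comm _ hpb _ hsa, ← R.assoc,
        R.E_idem _ hsa]
  have hgpb : R.NatLe (R.mul (R.star a) (R.plus b)) (R.plus b) := by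
    unfold RSgrp.NatLe
    rw [R.plus_of_mem hg, R.assoc, R.E_idem _ hpb]
  have hc : K.cores a (K.meet (K.r a) (K.d b)) = R.mul a (R.mul (R.star a) (R.plus b)) := by
    rw [hm]; exact hcores a _ hg (by rw [hle, hr]; exact hgsa)
  have hrt : K.restr (K.meet (K.r a) (K.d b)) b = R.mul (R.mul (R.star a) (R.plus b)) b := by
    rw [hm]; exact hrestr _ b hg (by rw [hle, hd]; exact hgpb)
  have hDdef : K.D (R.mul a (R.mul (R.star a) (R.plus b)))
      (R.mul (R.mul (R.star a) (R.plus b)) b) := by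
    rw [hD]
    rw [← R.assoc, R.star_mul_right hpb, R.star_mul_right hsa, R.E_idem _ hsa]
    rw [R.assoc, R.plus_mul_left hsa, R.plus_mul_left hpb, R.E_idem _ hpb]
  rw [IndCat.pp, hc, hrt, hmul _ _ hDdef]
  rw [R.assoc, ← R.assoc (R.mul (R.star a) (R.plus b)), R.E_idem _ hg,
      R.assoc (R.star a), R.plus_mul_self, ← R.assoc, R.mul_star_self]
/-- A strong (∧,r)-premorphism between restriction semigroups
is a strong inductive category prefunctor between the induced inductive
categories, i.e. satisfies (ICP1)–(ICP4) and (ICP5). -/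
theorem stmt_17 {S : Type u} {T : Type v} (R : RSgrp S) (R' : RSgrp T)
    (K : IndCat S) (L : IndCat T)
    (hK : InducedIndCat R K) (hL : InducedIndCat R' L)
    (θ : S → T) (hθ : IsStrongWPre R R' θ) :
    IsStrongICP K L θ := by
  obtain ⟨⟨h1, h2p, h2s⟩, hstr1, hstr2⟩ := hθ
  have hppK : ∀ a b, K.pp a b = R.mul a b := pp_eq_mul R K hK
  have hppL : ∀ a b, L.pp a b = R'.mul a b := pp_eq_mul R' L hL
  obtain ⟨hKle, hKD, hKmul, hKd, hKr, hKid, _, _, _⟩ := hK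
  obtain ⟨hLle, hLD, hLmul, hLd, hLr, hLid, _, _, hLmeet⟩ := hL
  have hθE : ∀ e ∈ R.E, R'.plus (θ e) = θ e := by
    intro e he
    have h := h2p e
    rw [R.plus_of_mem he] at h
    unfold RSgrp.NatLe at h
    rw [R'.plus_of_mem (R'.plus_mem (θ e)), R'.plus_mul_self] at h
    exact h
  have hθEmem : ∀ e ∈ R.E, θ e ∈ R'.E := fun e he => hθE e he ▸ R'.plus_mem (θ e)
  have icp1 : ICP1 K L θ := by
    intro s t hst
    rw [hLle, hppL, hKmul s t hst]
    exact h1 s t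
  have icp2 : ICP2 K L θ := by
    constructor
    · intro s; rw [hLle, hLd, hKd]; exact h2p s
    · intro s; rw [hLle, hLr, hKr]; exact h2s s
  have icp3 : ICP3 K L θ := by
    intro s t hst
    rw [hKle] at hst
    rw [hLle]
    have he : R.plus s ∈ R.E := R.plus_mem s
    have hte : θ (R.plus s) ∈ R'.E := hθEmem _ he
    have habs : R'.mul (θ (R.plus s)) (R'.plus (θ s)) = R'.plus (θ s) := by
      have h := h2p s
      unfold RSgrp.NatLe at h
      rw [R'.plus_of_mem (R'.plus_mem (θ s))] at h
      rw [R'.E_comm _ hte _ (R'.plus_mem (θ s))]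
      exact h.symm
    have habs' : R'.mul (θ (R.plus s)) (θ s) = θ s :=
      (R'.plus_spec (θ s) (θ (R.plus s)) hte).mpr habs
    have key : R'.mul (θ (R.plus s)) (θ t) = θ s := by
      have h := hstr1 (R.plus s) t
      rw [← hst, hθE _ he] at h
      rw [h, habs']
    have h := R'.mul_E_le hte (θ t)
    rw [key] at h
    exact h
  have icp4 : ICP4 K L θ := by
    constructor
    · intro a f _
      rw [hLle, hppL, hppK]
      exact h1 a f
    · intro e a _
      rw [hLle, hppL, hppK]
      exact h1 e a
  have icp5 : ICP5 K L θ := by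
    constructor
    · intro s t
      rw [hLd, hLd, hLd, hppL, hppK,
          hLmeet _ _ (R'.plus_mem _) (R'.plus_mem _),
          hstr1 s t, R'.plus_mul_left (R'.plus_mem (θ s))]
    · intro s t
      rw [hLr, hLr, hLr, hppL, hppK,
          hLmeet _ _ (R'.star_mem _) (R'.star_mem _),
          hstr2 s t, R'.star_mul_right (R'.star_mem (θ t))]
  exact ⟨⟨icp1, icp2, icp3, icp4⟩, icp5⟩
end

section
/- Let ψ : C → D be a strong inductive category prefunctor between inductive categories. Then ψ, regarded as a function between the restriction semigroups (C, ⊗) and (D, ⊗) (with respect to C_o and D_o, where a⁺ = d(a) and a⁎ = r(a)), is a strong (∧,r)-premorphism: it is an ordered (∧,r)-premorphism satisfying (sψ)⊗(tψ) = (sψ)⁺⊗((s⊗t)ψ) = ((s⊗t)ψ)⊗(tψ)⁎ for all s, t ∈ C. -/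
universe u v w

section AuxIndCat

variable {X : Type w} (M : IndCat X)

lemma aux_id_d_s18 {e : X} (he : IsIdOf M.D M.mul e) : M.d e = e :=
  (M.d_unique e e he he.1).symm

lemma aux_id_r_s18 {e : X} (he : IsIdOf M.D M.mul e) : M.r e = e :=
  (M.r_unique e e he he.1).symm

lemma aux_meet_eq_left {e f : X} (he : IsIdOf M.D M.mul e) (hf : IsIdOf M.D M.mul f)
    (h : M.le e f) : M.meet e f = e :=
  M.le_antisymm _ _ (M.meet_le_left e f he hf) (M.meet_glb e f e he hf he (M.le_refl e) h)

lemma aux_meet_eq_right {e f : X} (he : IsIdOf M.D M.mul e) (hf : IsIdOf M.D M.mul f)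
    (h : M.le f e) : M.meet e f = f :=
  M.le_antisymm _ _ (M.meet_le_right e f he hf) (M.meet_glb e f f he hf hf h (M.le_refl f))

lemma aux_cores_self (a : X) : M.cores a (M.r a) = a :=
  (M.cores_unique a (M.r a) (M.r_id a) (M.le_refl _) a (M.le_refl a) rfl).symm

lemma aux_restr_self (a : X) : M.restr (M.d a) a = a :=
  (M.restr_unique (M.d a) a (M.d_id a) (M.le_refl _) a (M.le_refl a) rfl).symm

lemma aux_le_restr_s18 {a b : X} (h : M.le a b) : M.restr (M.d a) b = a :=
  (M.restr_unique (M.d a) b (M.d_id a) (M.or2d a b h) a h rfl).symm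

lemma aux_le_cores_s18 {a b : X} (h : M.le a b) : M.cores b (M.r a) = a :=
  (M.cores_unique b (M.r a) (M.r_id a) (M.or2r a b h) a h rfl).symm

lemma aux_restr_of_le_id {m f : X} (hm : IsIdOf M.D M.mul m) (hf : IsIdOf M.D M.mul f)
    (h : M.le m f) : M.restr m f = m := by
  have hd : M.le m (M.d f) := by rw [aux_id_d_s18 M hf]; exact h
  exact (M.restr_unique m f hm hd m h (aux_id_d_s18 M hm)).symm

lemma aux_cores_of_le_id {m f : X} (hm : IsIdOf M.D M.mul m) (hf : IsIdOf M.D M.mul f)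
    (h : M.le m f) : M.cores f m = m := by
  have hr : M.le m (M.r f) := by rw [aux_id_r_s18 M hf]; exact h
  exact (M.cores_unique f m hm hr m h (aux_id_r_s18 M hm)).symm

lemma aux_pp_id_right (a f : X) (hf : IsIdOf M.D M.mul f) :
    M.pp a f = M.cores a (M.meet (M.r a) f) := by
  unfold IndCat.pp
  rw [aux_id_d_s18 M hf]
  have hm : IsIdOf M.D M.mul (M.meet (M.r a) f) := M.meet_id _ _ (M.r_id a) hf
  have hmr : M.le (M.meet (M.r a) f) (M.r a) := M.meet_le_left _ _ (M.r_id a) hf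
  have hmf : M.le (M.meet (M.r a) f) f := M.meet_le_right _ _ (M.r_id a) hf
  rw [aux_restr_of_le_id M hm hf hmf]
  exact hm.2.2.2 _ ((M.defined_iff _ _).mpr
    (by rw [M.cores_r a _ hm hmr, aux_id_d_s18 M hm]))

lemma aux_pp_id_left (e b : X) (he : IsIdOf M.D M.mul e) :
    M.pp e b = M.restr (M.meet e (M.d b)) b := by
  unfold IndCat.pp
  rw [aux_id_r_s18 M he]
  have hm : IsIdOf M.D M.mul (M.meet e (M.d b)) := M.meet_id _ _ he (M.d_id b)
  have hme : M.le (M.meet e (M.d b)) e := M.meet_le_left _ _ he (M.d_id b)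
  have hmd : M.le (M.meet e (M.d b)) (M.d b) := M.meet_le_right _ _ he (M.d_id b)
  rw [aux_cores_of_le_id M hm he hme]
  exact hm.2.2.1 _ ((M.defined_iff _ _).mpr
    (by rw [aux_id_r_s18 M hm, M.restr_d _ b hm hmd]))

lemma aux_pp_defined (a b : X) :
    M.D (M.cores a (M.meet (M.r a) (M.d b))) (M.restr (M.meet (M.r a) (M.d b)) b) := by
  have hm : IsIdOf M.D M.mul (M.meet (M.r a) (M.d b)) := M.meet_id _ _ (M.r_id a) (M.d_id b)
  have hmr := M.meet_le_left _ _ (M.r_id a) (M.d_id b)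
  have hmd := M.meet_le_right _ _ (M.r_id a) (M.d_id b)
  exact (M.defined_iff _ _).mpr (by rw [M.cores_r a _ hm hmr, M.restr_d _ b hm hmd])

lemma aux_cores_mono_s18 {a a' f f' : X} (haa' : M.le a a')
    (hf : IsIdOf M.D M.mul f) (hf' : IsIdOf M.D M.mul f') (hff' : M.le f f')
    (hfa : M.le f (M.r a)) (hf'a' : M.le f' (M.r a')) :
    M.le (M.cores a f) (M.cores a' f') := by
  have hfa' : M.le f (M.r a') := M.le_trans _ _ _ hff' hf'a'
  have hc'r : M.r (M.cores a' f') = f' := M.cores_r _ _ hf' hf'a'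
  have hfc' : M.le f (M.r (M.cores a' f')) := by rw [hc'r]; exact hff'
  have h1 : M.cores a f = M.cores a' f :=
    M.cores_unique a' f hf hfa' _ (M.le_trans _ _ _ (M.cores_le a f hf hfa) haa')
      (M.cores_r a f hf hfa)
  have h2 : M.cores (M.cores a' f') f = M.cores a' f :=
    M.cores_unique a' f hf hfa' _
      (M.le_trans _ _ _ (M.cores_le _ f hf hfc') (M.cores_le a' f' hf' hf'a'))
      (M.cores_r _ f hf hfc')
  rw [h1, ← h2]
  exact M.cores_le _ f hf hfc'

lemma aux_restr_mono_s18 {f f' b b' : X} (hbb' : M.le b b')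
    (hf : IsIdOf M.D M.mul f) (hf' : IsIdOf M.D M.mul f') (hff' : M.le f f')
    (hfb : M.le f (M.d b)) (hf'b' : M.le f' (M.d b')) :
    M.le (M.restr f b) (M.restr f' b') := by
  have hfb' : M.le f (M.d b') := M.le_trans _ _ _ hff' hf'b'
  have hc'd : M.d (M.restr f' b') = f' := M.restr_d _ _ hf' hf'b'
  have hfc' : M.le f (M.d (M.restr f' b')) := by rw [hc'd]; exact hff'
  have h1 : M.restr f b = M.restr f b' :=
    M.restr_unique f b' hf hfb' _ (M.le_trans _ _ _ (M.restr_le f b hf hfb) hbb')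
      (M.restr_d f b hf hfb)
  have h2 : M.restr f (M.restr f' b') = M.restr f b' :=
    M.restr_unique f b' hf hfb' _
      (M.le_trans _ _ _ (M.restr_le f _ hf hfc') (M.restr_le f' b' hf' hf'b'))
      (M.restr_d f _ hf hfc')
  rw [h1, ← h2]
  exact M.restr_le f _ hf hfc'

lemma aux_pp_mono_left {a a' : X} (b : X) (h : M.le a a') : M.le (M.pp a b) (M.pp a' b) := by
  have hm : IsIdOf M.D M.mul (M.meet (M.r a) (M.d b)) := M.meet_id _ _ (M.r_id a) (M.d_id b)
  have hm' : IsIdOf M.D M.mul (M.meet (M.r a') (M.d b)) := M.meet_id _ _ (M.r_id a') (M.d_id b)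
  have hmm' : M.le (M.meet (M.r a) (M.d b)) (M.meet (M.r a') (M.d b)) :=
    M.meet_glb _ _ _ (M.r_id a') (M.d_id b) hm
      (M.le_trans _ _ _ (M.meet_le_left _ _ (M.r_id a) (M.d_id b)) (M.or2r a a' h))
      (M.meet_le_right _ _ (M.r_id a) (M.d_id b))
  exact M.or1 _ _ _ _
    (aux_cores_mono_s18 M h hm hm' hmm' (M.meet_le_left _ _ (M.r_id a) (M.d_id b))
      (M.meet_le_left _ _ (M.r_id a') (M.d_id b)))
    (aux_restr_mono_s18 M (M.le_refl b) hm hm' hmm'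
      (M.meet_le_right _ _ (M.r_id a) (M.d_id b))
      (M.meet_le_right _ _ (M.r_id a') (M.d_id b)))
    (aux_pp_defined M a b) (aux_pp_defined M a' b)

lemma aux_pp_mono_right (a : X) {b b' : X} (h : M.le b b') : M.le (M.pp a b) (M.pp a b') := by
  have hm : IsIdOf M.D M.mul (M.meet (M.r a) (M.d b)) := M.meet_id _ _ (M.r_id a) (M.d_id b)
  have hm' : IsIdOf M.D M.mul (M.meet (M.r a) (M.d b')) := M.meet_id _ _ (M.r_id a) (M.d_id b')
  have hmm' : M.le (M.meet (M.r a) (M.d b)) (M.meet (M.r a) (M.d b')) :=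
    M.meet_glb _ _ _ (M.r_id a) (M.d_id b') hm
      (M.meet_le_left _ _ (M.r_id a) (M.d_id b))
      (M.le_trans _ _ _ (M.meet_le_right _ _ (M.r_id a) (M.d_id b)) (M.or2d b b' h))
  exact M.or1 _ _ _ _
    (aux_cores_mono_s18 M (M.le_refl a) hm hm' hmm' (M.meet_le_left _ _ (M.r_id a) (M.d_id b))
      (M.meet_le_left _ _ (M.r_id a) (M.d_id b')))
    (aux_restr_mono_s18 M h hm hm' hmm'
      (M.meet_le_right _ _ (M.r_id a) (M.d_id b))
      (M.meet_le_right _ _ (M.r_id a) (M.d_id b')))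
    (aux_pp_defined M a b) (aux_pp_defined M a b')

lemma aux_pp_absorb_d (a b : X) : M.pp a b = M.pp (M.pp a (M.d b)) b := by
  have hm : IsIdOf M.D M.mul (M.meet (M.r a) (M.d b)) := M.meet_id _ _ (M.r_id a) (M.d_id b)
  have hmr := M.meet_le_left _ _ (M.r_id a) (M.d_id b)
  have hmd := M.meet_le_right _ _ (M.r_id a) (M.d_id b)
  have h1 : M.pp a (M.d b) = M.cores a (M.meet (M.r a) (M.d b)) :=
    aux_pp_id_right M a (M.d b) (M.d_id b)
  rw [h1]
  have hr : M.r (M.cores a (M.meet (M.r a) (M.d b))) = M.meet (M.r a) (M.d b) :=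
    M.cores_r a _ hm hmr
  have hcc : M.cores (M.cores a (M.meet (M.r a) (M.d b))) (M.meet (M.r a) (M.d b))
      = M.cores a (M.meet (M.r a) (M.d b)) := by
    have := aux_le_cores_s18 M (M.le_refl (M.cores a (M.meet (M.r a) (M.d b))))
    rwa [hr] at this
  show M.pp a b = M.pp (M.cores a (M.meet (M.r a) (M.d b))) b
  unfold IndCat.pp
  rw [hr, aux_meet_eq_left M hm (M.d_id b) hmd, hcc]

lemma aux_pp_absorb_r (a b : X) : M.pp a b = M.pp a (M.pp (M.r a) b) := by
  have hm : IsIdOf M.D M.mul (M.meet (M.r a) (M.d b)) := M.meet_id _ _ (M.r_id a) (M.d_id b)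
  have hmr := M.meet_le_left _ _ (M.r_id a) (M.d_id b)
  have hmd := M.meet_le_right _ _ (M.r_id a) (M.d_id b)
  have h1 : M.pp (M.r a) b = M.restr (M.meet (M.r a) (M.d b)) b :=
    aux_pp_id_left M (M.r a) b (M.r_id a)
  rw [h1]
  have hd : M.d (M.restr (M.meet (M.r a) (M.d b)) b) = M.meet (M.r a) (M.d b) :=
    M.restr_d _ b hm hmd
  have hrr : M.restr (M.meet (M.r a) (M.d b)) (M.restr (M.meet (M.r a) (M.d b)) b)
      = M.restr (M.meet (M.r a) (M.d b)) b := by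
    have := aux_le_restr_s18 M (M.le_refl (M.restr (M.meet (M.r a) (M.d b)) b))
    rwa [hd] at this
  show M.pp a b = M.pp a (M.restr (M.meet (M.r a) (M.d b)) b)
  unfold IndCat.pp
  rw [hd, aux_meet_eq_right M (M.r_id a) hm hmr, hrr]

end AuxIndCat

lemma aux_icp1_ext {C : Type u} {D : Type v} (K : IndCat C) (L : IndCat D)
    (ψ : C → D) (h : IsStrongICP K L ψ) (s t : C) :
    L.le (L.pp (ψ s) (ψ t)) (ψ (K.pp s t)) := by
  obtain ⟨⟨h1, h2, h3, h4⟩, h5⟩ := h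
  have hm : IsIdOf K.D K.mul (K.meet (K.r s) (K.d t)) := K.meet_id _ _ (K.r_id s) (K.d_id t)
  have hmr := K.meet_le_left _ _ (K.r_id s) (K.d_id t)
  have hmd := K.meet_le_right _ _ (K.r_id s) (K.d_id t)
  set m := K.meet (K.r s) (K.d t) with hmdef
  set s' := K.cores s m with hs'def
  set t' := K.restr m t with ht'def
  have hs'eq : K.pp s (K.d t) = s' := aux_pp_id_right K s (K.d t) (K.d_id t)
  have ht'eq : K.pp m t = t' := by
    rw [aux_pp_id_left K m t hm, aux_meet_eq_left K hm (K.d_id t) hmd]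
  have hrs' : K.r s' = m := K.cores_r s m hm hmr
  have hDst : K.D s' t' := aux_pp_defined K s t
  have hmul : K.pp s t = K.mul s' t' := rfl
  -- step 1 : pp ψs ψt ≤ pp ψs' ψt
  have e1 : L.le (L.pp (ψ s) (L.d (ψ t))) (ψ s') := by
    have a1 : L.le (L.pp (ψ s) (L.d (ψ t))) (L.pp (ψ s) (ψ (K.d t))) :=
      aux_pp_mono_right L (ψ s) (h2.1 t)
    have a2 : L.le (L.pp (ψ s) (ψ (K.d t))) (ψ (K.pp s (K.d t))) :=
      h4.1 s (K.d t) (K.d_id t)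
    rw [hs'eq] at a2
    exact L.le_trans _ _ _ a1 a2
  have step1 : L.le (L.pp (ψ s) (ψ t)) (L.pp (ψ s') (ψ t)) := by
    rw [aux_pp_absorb_d L (ψ s) (ψ t)]
    exact aux_pp_mono_left L (ψ t) e1
  -- step 2 : pp ψs' ψt ≤ pp ψs' ψt'
  have e2 : L.le (L.pp (L.r (ψ s')) (ψ t)) (ψ t') := by
    have a1 : L.le (L.pp (L.r (ψ s')) (ψ t)) (L.pp (ψ (K.r s')) (ψ t)) :=
      aux_pp_mono_left L (ψ t) (h2.2 s')
    have a2 : L.le (L.pp (ψ (K.r s')) (ψ t)) (ψ (K.pp (K.r s') t)) :=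
      h4.2 (K.r s') t (K.r_id s')
    rw [hrs', ht'eq] at a2
    rw [hrs'] at a1
    exact L.le_trans _ _ _ a1 a2
  have step2 : L.le (L.pp (ψ s') (ψ t)) (L.pp (ψ s') (ψ t')) := by
    rw [aux_pp_absorb_r L (ψ s') (ψ t)]
    exact aux_pp_mono_right L (ψ s') e2
  -- step 3 : pp ψs' ψt' ≤ ψ (s'·t') = ψ (s⊗t)
  have step3 : L.le (L.pp (ψ s') (ψ t')) (ψ (K.pp s t)) := by
    rw [hmul]; exact h1 s' t' hDst
  exact L.le_trans _ _ _ step1 (L.le_trans _ _ _ step2 step3)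

/-- A strong inductive category prefunctor, regarded as a
function between the restriction semigroups (C,⊗) and (D,⊗) (with
a⁺ = d(a), a⁎ = r(a)), is a strong (∧,r)-premorphism: an ordered
(∧,r)-premorphism with (sψ)⊗(tψ) = (sψ)⁺⊗((s⊗t)ψ) = ((s⊗t)ψ)⊗(tψ)⁎. -/
theorem stmt_18 {C : Type u} {D : Type v} (K : IndCat C) (L : IndCat D)
    (ψ : C → D) (h : IsStrongICP K L ψ) :
    (∀ s t, L.le (L.pp (ψ s) (ψ t)) (ψ (K.pp s t))) ∧
    (∀ s, L.le (L.d (ψ s)) (ψ (K.d s))) ∧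
    (∀ s, L.le (L.r (ψ s)) (ψ (K.r s))) ∧
    (∀ s t, K.le s t → L.le (ψ s) (ψ t)) ∧
    (∀ s t, L.pp (ψ s) (ψ t) = L.pp (L.d (ψ s)) (ψ (K.pp s t))) ∧
    (∀ s t, L.pp (ψ s) (ψ t) = L.pp (ψ (K.pp s t)) (L.r (ψ t))) := by
  refine ⟨aux_icp1_ext K L ψ h, h.1.2.1.1, h.1.2.1.2, h.1.2.2.1, ?_, ?_⟩
  · intro s t
    have hAB := aux_icp1_ext K L ψ h s t
    have hdA : L.d (L.pp (ψ s) (ψ t)) = L.meet (L.d (ψ s)) (L.d (ψ (K.pp s t))) := h.2.1 s t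
    rw [aux_pp_id_left L (L.d (ψ s)) (ψ (K.pp s t)) (L.d_id (ψ s)), ← hdA,
      aux_le_restr_s18 L hAB]
  · intro s t
    have hAB := aux_icp1_ext K L ψ h s t
    have hrA : L.r (L.pp (ψ s) (ψ t)) = L.meet (L.r (ψ (K.pp s t))) (L.r (ψ t)) := h.2.2 s t
    rw [aux_pp_id_right L (ψ (K.pp s t)) (L.r (ψ t)) (L.r_id (ψ t)), ← hrA,
      aux_le_cores_s18 L hAB]
end
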